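/- If all entries of a random matrix $W$ have strictly positive means, and $M$ is a random matrix independent of $W$ such that $\mathrm{Cov}(m_{ib}, m_{jd}) > 0$ for all indices $i,b,j,d$, then the product $WM$ satisfies $\mathrm{Cov}((WM)_{ab}, (WM)_{cd}) > 0$ for all indices $a,b,c,d$, provided the (mean-field) entries of $W$ are independent with nonnegative variances. -/

import Mathlib

open MeasureTheory ProbabilityTheory

/-! By bilinearity the covariance is the sum over `i, j` of `Cov(W a i * M i b, W c j * M j d)`.
Since `W` is independent of `M`, each term equals
`E[W a i * W c j] * Cov(M i b, M j d) + Cov(W a i, W c j) * E[M i b] * E[M j d]`.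
Independence of the entries of `W` makes `Cov(W a i, W c j)` either a variance or zero, so it is
nonnegative and `E[W a i * W c j] ≥ E[W a i] * E[W c j] > 0`. Hence every term is positive. -/

/-- Covariance of two real random variables. -/
noncomputable def cov {Ω : Type*} [MeasurableSpace Ω] (μ : Measure Ω) (X Y : Ω → ℝ) : ℝ :=
  (∫ ω, X ω * Y ω ∂μ) - (∫ ω, X ω ∂μ) * (∫ ω, Y ω ∂μ)

namespace ProbabilityTheory

variable {Ω : Type*} [MeasurableSpace Ω] {μ : Measure Ω}

lemma cov_eq_covariance [IsProbabilityMeasure μ] {X Y : Ω → ℝ} (hX : MemLp X 2 μ)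
    (hY : MemLp Y 2 μ) : cov μ X Y = cov[X, Y; μ] :=
  (covariance_eq_sub hX hY).symm

lemma IndepFun.memLp_two_mul {X Y : Ω → ℝ} (hXY : X ⟂ᵢ[μ] Y) (hX : MemLp X 2 μ)
    (hY : MemLp Y 2 μ) : MemLp (X * Y) 2 μ := by
  have hsq : (fun ω => X ω ^ 2) ⟂ᵢ[μ] (fun ω => Y ω ^ 2) :=
    hXY.comp (measurable_id.pow_const 2) (measurable_id.pow_const 2)
  refine (memLp_two_iff_integrable_sq (hX.1.mul hY.1)).2 ?_
  simp_rw [Pi.mul_apply, mul_pow]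
  exact hsq.integrable_mul hX.integrable_sq hY.integrable_sq

lemma IndepFun.covariance_mul_mul [IsProbabilityMeasure μ] {A A' B B' : Ω → ℝ}
    (hind : (fun ω => (A ω, A' ω)) ⟂ᵢ[μ] (fun ω => (B ω, B' ω)))
    (hA : MemLp A 2 μ) (hA' : MemLp A' 2 μ) (hB : MemLp B 2 μ) (hB' : MemLp B' 2 μ) :
    cov[fun ω => A ω * B ω, fun ω => A' ω * B' ω; μ]
      = μ[A * A'] * cov[B, B'; μ] + cov[A, A'; μ] * (μ[B] * μ[B']) := by
  have hAB : A ⟂ᵢ[μ] B := hind.comp measurable_fst measurable_fst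
  have hAB' : A' ⟂ᵢ[μ] B' := hind.comp measurable_snd measurable_snd
  have hAA'BB' : (A * A') ⟂ᵢ[μ] (B * B') :=
    hind.comp (measurable_fst.mul measurable_snd) (measurable_fst.mul measurable_snd)
  have hprod : μ[A * B * (A' * B')] = μ[A * A'] * μ[B * B'] := by
    rw [← hAA'BB'.integral_mul_eq_mul_integral (hA.1.mul hA'.1) (hB.1.mul hB'.1)]
    congr 1
    ext ω
    simp only [Pi.mul_apply]
    ring
  change cov[A * B, A' * B'; μ] = _
  rw [covariance_eq_sub (hAB.memLp_two_mul hA hB) (hAB'.memLp_two_mul hA' hB'),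
    covariance_eq_sub hB hB', covariance_eq_sub hA hA', hprod,
    hAB.integral_mul_eq_mul_integral hA.1 hB.1, hAB'.integral_mul_eq_mul_integral hA'.1 hB'.1]
  ring

variable {ι : Type*} {X : ι → Ω → ℝ}

lemma iIndepFun.covariance_nonneg (hind : iIndepFun X μ) (hX : ∀ i, MemLp (X i) 2 μ)
    (i j : ι) : 0 ≤ cov[X i, X j; μ] := by
  rcases eq_or_ne i j with rfl | hij
  · rw [covariance_self (hX i).1.aemeasurable]
    exact variance_nonneg _ _
  · exact ((hind.indepFun hij).covariance_eq_zero (hX i) (hX j)).ge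

lemma iIndepFun.integral_mul_pos [IsProbabilityMeasure μ] (hind : iIndepFun X μ)
    (hX : ∀ i, MemLp (X i) 2 μ) (hmean : ∀ i, 0 < μ[X i]) (i j : ι) : 0 < μ[X i * X j] := by
  have h := covariance_eq_sub (hX i) (hX j)
  nlinarith [hind.covariance_nonneg hX i j, mul_pos (hmean i) (hmean j)]

end ProbabilityTheory

theorem mean_field_layer_preserves_positive_covariance_general
    {Ω : Type*} [MeasurableSpace Ω] (μ : Measure Ω) [IsProbabilityMeasure μ]
    {KL K1 K0 : ℕ} (hK1 : 0 < K1)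
    (W : Fin KL → Fin K1 → Ω → ℝ) (M : Fin K1 → Fin K0 → Ω → ℝ)
    (hWL2 : ∀ a i, MemLp (W a i) 2 μ) (hML2 : ∀ i b, MemLp (M i b) 2 μ)
    -- the entries of W are mutually independent (mean-field)
    (hWindep : iIndepFun
      (fun p : Fin KL × Fin K1 => fun ω => W p.1 p.2 ω) μ)
    -- W is independent of M
    (hindep : IndepFun (fun ω => fun p : Fin KL × Fin K1 => W p.1 p.2 ω)
                       (fun ω => fun p : Fin K1 × Fin K0 => M p.1 p.2 ω) μ)
    -- entries of W have strictly positive means and nonnegative variances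
    (hWmean : ∀ a i, 0 < ∫ ω, W a i ω ∂μ)
    -- entries of M have nonnegative means and all-positive pairwise covariances
    (hMmean : ∀ i b, 0 ≤ ∫ ω, M i b ω ∂μ)
    (hMcov : ∀ i b j d, 0 < cov μ (M i b) (M j d))
    (a : Fin KL) (b : Fin K0) (c : Fin KL) (d : Fin K0) :
    0 < cov μ (fun ω => ∑ i, W a i ω * M i b ω)
              (fun ω => ∑ j, W c j ω * M j d ω) := by
  have hW : ∀ p : Fin KL × Fin K1, MemLp (W p.1 p.2) 2 μ := fun p => hWL2 p.1 p.2
  have hWM : ∀ a i b, MemLp (fun ω => W a i ω * M i b ω) 2 μ := fun a i b =>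
    (hindep.comp (measurable_pi_apply (a, i)) (measurable_pi_apply (i, b))).memLp_two_mul
      (hWL2 a i) (hML2 i b)
  have hpair : ∀ i j,
      IndepFun (fun ω => (W a i ω, W c j ω)) (fun ω => (M i b ω, M j d ω)) μ := fun i j =>
    hindep.comp (φ := fun w => (w (a, i), w (c, j))) (ψ := fun m => (m (i, b), m (j, d)))
      (by fun_prop) (by fun_prop)
  have hne : (Finset.univ : Finset (Fin K1)).Nonempty :=
    Finset.univ_nonempty_iff.2 ⟨⟨0, hK1⟩⟩
  rw [cov_eq_covariance (memLp_finsetSum _ fun i _ => hWM a i b)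
      (memLp_finsetSum _ fun j _ => hWM c j d),
    covariance_fun_sum_fun_sum (hWM a · b) (hWM c · d)]
  refine Finset.sum_pos (fun i _ => Finset.sum_pos (fun j _ => ?_) hne) hne
  rw [(hpair i j).covariance_mul_mul (hWL2 a i) (hWL2 c j) (hML2 i b) (hML2 j d),
    ← cov_eq_covariance (hML2 i b) (hML2 j d)]
  exact add_pos_of_pos_of_nonneg
    (mul_pos (hWindep.integral_mul_pos hW (fun p => hWmean p.1 p.2) (a, i) (c, j))
      (hMcov i b j d))
    (mul_nonneg (hWindep.covariance_nonneg hW (a, i) (c, j))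
      (mul_nonneg (hMmean i b) (hMmean j d)))

/-- Multiplying by a mean-field random matrix with positive-mean entries preserves
everywhere-positive covariance of the product matrix. -/
theorem mean_field_layer_preserves_positive_covariance
    {Ω : Type*} [MeasurableSpace Ω] (μ : Measure Ω) [IsProbabilityMeasure μ]
    {KL K1 K0 : ℕ} (hK1 : 0 < K1)
    (W : Fin KL → Fin K1 → Ω → ℝ) (M : Fin K1 → Fin K0 → Ω → ℝ)
    (hWmeas : ∀ a i, Measurable (W a i)) (hMmeas : ∀ i b, Measurable (M i b))
    (hWL2 : ∀ a i, MemLp (W a i) 2 μ) (hML2 : ∀ i b, MemLp (M i b) 2 μ)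
    -- the entries of W are mutually independent (mean-field)
    (hWindep : iIndepFun
      (fun p : Fin KL × Fin K1 => fun ω => W p.1 p.2 ω) μ)
    -- W is independent of M
    (hindep : IndepFun (fun ω => fun p : Fin KL × Fin K1 => W p.1 p.2 ω)
                       (fun ω => fun p : Fin K1 × Fin K0 => M p.1 p.2 ω) μ)
    -- entries of W have strictly positive means and nonnegative variances
    (hWmean : ∀ a i, 0 < ∫ ω, W a i ω ∂μ)
    (hWvar : ∀ a i, 0 ≤ cov μ (W a i) (W a i))
    -- entries of M have nonnegative means and all-positive pairwise covariances
    (hMmean : ∀ i b, 0 ≤ ∫ ω, M i b ω ∂μ)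
    (hMcov : ∀ i b j d, 0 < cov μ (M i b) (M j d))
    (a : Fin KL) (b : Fin K0) (c : Fin KL) (d : Fin K0) :
    0 < cov μ (fun ω => ∑ i, W a i ω * M i b ω)
              (fun ω => ∑ j, W c j ω * M j d ω) :=
  mean_field_layer_preserves_positive_covariance_general μ hK1 W M hWL2 hML2 hWindep hindep hWmean
    hMmean hMcov a b c d
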